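/- arXiv:1909.04717 — 2 statements merged into one kernel-verified Lean document; each statement's English description precedes it below -/
import Mathlib

section
/- Let S : ℝ → Set ℝ have nonempty values, with −S maximal monotone and range of S contained in [−M, M] for some M > 0. Then for every a ∈ ℝ and every ε > 0 there exists δ > 0 such that for all b ∈ ℝ with |a − b| < δ there exist μ ∈ S(a) and ν ∈ S(b) with |μ − ν| < ε. -/
/-!
For a maximal monotone `T : ℝ → Set ℝ` with nonempty values, the infimum `l` of the values
of `T` on `(a, ∞)` is monotonically related to every point of the graph, so maximality puts
it into `T a`. Any value `x ∈ T c` with `c > a` and `x < l + ε` then squeezes `T b` into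
`[l, l + ε)` for all `b ∈ (a, c)`. Reflecting `x ↦ -T (-x)` gives the same on the left of `a`,
and the theorem for `S` is the statement for `T = -S`.
-/

/-- A set-valued map `T : ℝ → Set ℝ` is monotone. -/
def MonotoneSV (T : ℝ → Set ℝ) : Prop :=
  ∀ a b μ ν : ℝ, μ ∈ T a → ν ∈ T b → 0 ≤ (μ - ν) * (a - b)

/-- A set-valued map is maximal monotone: monotone and its graph admits no proper
monotone extension. -/
def MaximalMonotoneSV (T : ℝ → Set ℝ) : Prop :=
  MonotoneSV T ∧ ∀ T' : ℝ → Set ℝ, MonotoneSV T' → (∀ a, T a ⊆ T' a) → ∀ a, T' a = T a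

/-- `−S`, defined by `(−S)(a) = {−μ : μ ∈ S a}`. -/
def negSV (S : ℝ → Set ℝ) : ℝ → Set ℝ := fun a => (fun μ => -μ) '' S a

open Set

section

variable {T : ℝ → Set ℝ}

@[simp]
theorem mem_negSV {x μ : ℝ} : μ ∈ negSV T x ↔ -μ ∈ T x := by
  simp [negSV]

def reflectSV (T : ℝ → Set ℝ) : ℝ → Set ℝ := fun x => negSV T (-x)

@[simp]
theorem mem_reflectSV {x μ : ℝ} : μ ∈ reflectSV T x ↔ -μ ∈ T (-x) :=
  mem_negSV

@[simp]
theorem reflectSV_reflectSV : reflectSV (reflectSV T) = T := by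
  ext x μ
  simp

namespace MonotoneSV

theorem le_of_lt (hT : MonotoneSV T) {a b μ ν : ℝ} (hab : a < b) (hμ : μ ∈ T a)
    (hν : ν ∈ T b) : μ ≤ ν :=
  sub_nonneg.1 <| nonneg_of_mul_nonneg_left (hT b a ν μ hν hμ) (sub_pos.2 hab)

theorem reflectSV (hT : MonotoneSV T) : MonotoneSV (reflectSV T) := by
  intro a b μ ν hμ hν
  have := hT _ _ _ _ (mem_reflectSV.1 hμ) (mem_reflectSV.1 hν)
  linarith

end MonotoneSV

namespace MaximalMonotoneSV

theorem reflectSV (hT : MaximalMonotoneSV T) : MaximalMonotoneSV (reflectSV T) := by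
  refine ⟨hT.1.reflectSV, fun T' hT' hsub => ?_⟩
  have hext : ∀ x, T x ⊆ _root_.reflectSV T' x := fun x μ hμ =>
    mem_reflectSV.2 <| hsub (-x) <| by simpa using hμ
  have := congrArg _root_.reflectSV (funext (hT.2 _ hT'.reflectSV hext))
  simpa using congrFun this

theorem mem_of_forall_nonneg (hT : MaximalMonotoneSV T) {a μ : ℝ}
    (h : ∀ b, ∀ ν ∈ T b, 0 ≤ (μ - ν) * (a - b)) : μ ∈ T a := by
  let T' : ℝ → Set ℝ := fun x => {ν | ν ∈ T x ∨ (x = a ∧ ν = μ)}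
  have hT' : MonotoneSV T' := by
    rintro x y ξ ν (hξ | ⟨rfl, rfl⟩) (hν | ⟨rfl, rfl⟩)
    · exact hT.1 x y ξ ν hξ hν
    · linarith [h x ξ hξ]
    · exact h y ν hν
    · simp
  rw [← hT.2 T' hT' (fun x ν hν => Or.inl hν) a]
  exact Or.inr ⟨rfl, rfl⟩

theorem exists_mem_abs_sub_lt_right (hT : MaximalMonotoneSV T) (hne : ∀ x, (T x).Nonempty)
    (a : ℝ) {ε : ℝ} (hε : 0 < ε) :
    ∃ μ ∈ T a, ∃ c > a, ∀ b ∈ Ioo a c, ∀ ν ∈ T b, |μ - ν| < ε := by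
  set A := ⋃ b ∈ Ioi a, T b
  have hmemA {b ν : ℝ} (hb : a < b) (hν : ν ∈ T b) : ν ∈ A := mem_biUnion hb hν
  have hAne : A.Nonempty := (hne (a + 1)).mono fun _ => hmemA (lt_add_one a)
  have hlow {b ν : ℝ} (hb : b ≤ a) (hν : ν ∈ T b) : ν ≤ sInf A := by
    refine le_csInf hAne fun x hx => ?_
    obtain ⟨c, hc, hx⟩ := mem_iUnion₂.1 hx
    exact hT.1.le_of_lt (hb.trans_lt hc) hν hx
  have hAbdd : BddBelow A := by
    obtain ⟨μ₀, hμ₀⟩ := hne a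
    refine ⟨μ₀, fun x hx => ?_⟩
    obtain ⟨c, hc, hx⟩ := mem_iUnion₂.1 hx
    exact hT.1.le_of_lt hc hμ₀ hx
  have hinf : sInf A ∈ T a := by
    refine hT.mem_of_forall_nonneg fun b ν hν => ?_
    rcases le_or_gt b a with hb | hb
    · exact mul_nonneg (sub_nonneg.2 (hlow hb hν)) (sub_nonneg.2 hb)
    · exact mul_nonneg_of_nonpos_of_nonpos (sub_nonpos.2 (csInf_le hAbdd (hmemA hb hν)))
        (sub_nonpos.2 hb.le)
  obtain ⟨x, hx, hxε⟩ := exists_lt_of_csInf_lt hAne (lt_add_of_pos_right (sInf A) hε)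
  obtain ⟨c, hc, hxc⟩ := mem_iUnion₂.1 hx
  refine ⟨sInf A, hinf, c, hc, fun b hb ν hν => abs_sub_lt_iff.2 ⟨?_, ?_⟩⟩
  · linarith [csInf_le hAbdd (hmemA hb.1 hν)]
  · linarith [hT.1.le_of_lt hb.2 hν hxc]

theorem exists_mem_abs_sub_lt_left (hT : MaximalMonotoneSV T) (hne : ∀ x, (T x).Nonempty)
    (a : ℝ) {ε : ℝ} (hε : 0 < ε) :
    ∃ μ ∈ T a, ∃ c < a, ∀ b ∈ Ioo c a, ∀ ν ∈ T b, |μ - ν| < ε := by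
  have hne' : ∀ x, (_root_.reflectSV T x).Nonempty := fun x =>
    let ⟨μ, hμ⟩ := hne (-x)
    ⟨-μ, by simpa using hμ⟩
  obtain ⟨μ, hμ, c, hc, h⟩ := hT.reflectSV.exists_mem_abs_sub_lt_right hne' (-a) hε
  refine ⟨-μ, by simpa using hμ, -c, by linarith, fun b hb ν hν => ?_⟩
  have := h (-b) ⟨by linarith [hb.2], by linarith [hb.1]⟩ (-ν) (by simpa using hν)
  rwa [show -μ - ν = -(μ - -ν) by ring, abs_neg]

theorem exists_abs_sub_lt (hT : MaximalMonotoneSV T) (hne : ∀ x, (T x).Nonempty)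
    (a : ℝ) {ε : ℝ} (hε : 0 < ε) :
    ∃ δ > 0, ∀ b, |a - b| < δ → ∃ μ ∈ T a, ∃ ν ∈ T b, |μ - ν| < ε := by
  obtain ⟨μr, hμr, cr, hcr, hr⟩ := hT.exists_mem_abs_sub_lt_right hne a hε
  obtain ⟨μl, hμl, cl, hcl, hl⟩ := hT.exists_mem_abs_sub_lt_left hne a hε
  refine ⟨min (cr - a) (a - cl), lt_min (sub_pos.2 hcr) (sub_pos.2 hcl), fun b hb => ?_⟩
  obtain ⟨ν, hν⟩ := hne b
  obtain ⟨hbr, hbl⟩ := abs_sub_lt_iff.1 hb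
  rcases lt_trichotomy b a with hba | rfl | hab
  · exact ⟨μl, hμl, ν, hν, hl b ⟨by linarith [min_le_right (cr - a) (a - cl)], hba⟩ ν hν⟩
  · exact ⟨ν, hν, ν, hν, by simpa using hε⟩
  · exact ⟨μr, hμr, ν, hν, hr b ⟨hab, by linarith [min_le_left (cr - a) (a - cl)]⟩ ν hν⟩

end MaximalMonotoneSV

end

theorem sv_eps_delta_general (S : ℝ → Set ℝ)
    (hne : ∀ a, (S a).Nonempty)
    (hmax : MaximalMonotoneSV (negSV S)) :
    ∀ a : ℝ, ∀ ε > 0, ∃ δ > 0, ∀ b : ℝ, |a - b| < δ →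
      ∃ μ ∈ S a, ∃ ν ∈ S b, |μ - ν| < ε := by
  intro a ε hε
  have hne' : ∀ x, (negSV S x).Nonempty := fun x => (hne x).image _
  obtain ⟨δ, hδ, h⟩ := hmax.exists_abs_sub_lt hne' a hε
  refine ⟨δ, hδ, fun b hb => ?_⟩
  obtain ⟨μ, hμ, ν, hν, hμν⟩ := h b hb
  refine ⟨-μ, mem_negSV.1 hμ, -ν, mem_negSV.1 hν, ?_⟩
  rwa [← neg_sub', abs_neg]

/-- C2): for every `a` and `ε > 0` there is `δ > 0` such that for all `b` with
`|a − b| < δ` there are `μ ∈ S(a)`, `ν ∈ S(b)` with `|μ − ν| < ε`. -/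
theorem sv_eps_delta (S : ℝ → Set ℝ) (M : ℝ) (hM : 0 < M)
    (hne : ∀ a, (S a).Nonempty)
    (hmax : MaximalMonotoneSV (negSV S))
    (hbdd : ∀ a, S a ⊆ Set.Icc (-M) M) :
    ∀ a : ℝ, ∀ ε > 0, ∃ δ > 0, ∀ b : ℝ, |a - b| < δ →
      ∃ μ ∈ S a, ∃ ν ∈ S b, |μ - ν| < ε :=
  sv_eps_delta_general S hne hmax
end

section
/- Let u : 𝕋ⁿ × [0,T) → ℝ satisfy: (i) u(·,0) is α-Hölder continuous with constant H₀; (ii) |u(x,t) − u(x,0)| ≤ M t^α for all x, t; and (iii) for all shifts e ∈ 𝕋ⁿ, h ∈ (0,T) and all (x,t) with t + h < T, |u(x,t) − u(x+e, t+h)| ≤ e^{λ t}(max_x |u(x,0) − u(x+e,h)| + c(|e|^α + h^α)) for constants λ, c > 0. Then u is α-Hölder continuous in space-time: |u(x,t) − u(y,s)| ≤ H_u(|x−y|^α + |t−s|^α) for some constant H_u depending only on H₀, M, λ, c, T. -/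
/-! Shifting by `e = y - x` in space and `h = s - t` in time, hypothesis (iii) controls
`|u x t - u y s|` by the initial shifted difference `|u z 0 - u (z + e) h|`, which (i) and (ii)
bound by `H₀ ‖e‖^α + M h^α`. This settles `t < s`; for equal times pass through the
intermediate point `(y, t + h)` and let `h → 0⁺`. -/

open Set Filter Topology

theorem le_of_forall_le_add_mul_rpow {z a b α δ : ℝ} (hα : 0 < α) (hδ : 0 < δ)
    (hle : ∀ h ∈ Ioo 0 δ, z ≤ a + b * h ^ α) : z ≤ a := by
  have hlim : Tendsto (fun h : ℝ => a + b * h ^ α) (𝓝[>] 0) (𝓝 a) := by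
    have hpow := (Real.continuousAt_rpow_const 0 α (Or.inr hα.le)).tendsto
    rw [Real.zero_rpow hα.ne'] at hpow
    simpa using (hpow.mono_left nhdsWithin_le_nhds).const_mul b |>.const_add a
  exact ge_of_tendsto hlim (eventually_of_mem (Ioo_mem_nhdsGT hδ) hle)

section ShiftEstimate

variable {X : Type*} [SeminormedAddCommGroup X] {u : X → ℝ → ℝ} {α T H0 M lam c : ℝ}

theorem abs_sub_shift_zero_le (hu0 : ∀ x y, |u x 0 - u y 0| ≤ H0 * dist x y ^ α)
    (hut : ∀ x, ∀ t ∈ Ico 0 T, |u x t - u x 0| ≤ M * t ^ α) (z e : X) {h : ℝ}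
    (hh : h ∈ Ico 0 T) : |u z 0 - u (z + e) h| ≤ H0 * ‖e‖ ^ α + M * h ^ α := by
  have hspace : |u z 0 - u (z + e) 0| ≤ H0 * ‖e‖ ^ α := by
    simpa [dist_eq_norm] using hu0 z (z + e)
  have htime : |u (z + e) 0 - u (z + e) h| ≤ M * h ^ α := by
    rw [abs_sub_comm]; exact hut (z + e) h hh
  exact (abs_sub_le _ _ _).trans (add_le_add hspace htime)

variable (hu0 : ∀ x y, |u x 0 - u y 0| ≤ H0 * dist x y ^ α)
  (hut : ∀ x, ∀ t ∈ Ico 0 T, |u x t - u x 0| ≤ M * t ^ α)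
  (hshift : ∀ (e : X) (h : ℝ), 0 < h → h < T →
    ∀ A : ℝ, (∀ y, |u y 0 - u (y + e) h| ≤ A) →
    ∀ x, ∀ t ∈ Ico 0 T, t + h < T →
      |u x t - u (x + e) (t + h)| ≤ Real.exp (lam * t) * (A + c * (‖e‖ ^ α + h ^ α)))
include hu0 hut hshift

theorem abs_sub_le_of_lt (x y : X) {t s : ℝ} (ht : t ∈ Ico 0 T) (hs : s < T) (hts : t < s) :
    |u x t - u y s| ≤
      Real.exp (lam * t) * ((H0 + c) * dist x y ^ α + (M + c) * (s - t) ^ α) := by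
  have hbound := hshift (y - x) (s - t) (by linarith) (by linarith [ht.1]) _
    (fun z => abs_sub_shift_zero_le hu0 hut z (y - x) ⟨by linarith, by linarith [ht.1]⟩)
    x t ht (by linarith)
  rw [add_sub_cancel, add_sub_cancel, ← dist_eq_norm, dist_comm] at hbound
  exact hbound.trans_eq (by ring)

theorem abs_sub_le_of_eq (hα : 0 < α) (x y : X) {t : ℝ} (ht : t ∈ Ico 0 T) :
    |u x t - u y t| ≤ Real.exp (lam * t) * ((H0 + c) * dist x y ^ α) := by
  refine le_of_forall_le_add_mul_rpow hα (sub_pos.2 ht.2)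
    (b := Real.exp (lam * t) * (2 * (M + c))) fun h hh => ?_
  have hs : t + h < T := by linarith [hh.2]
  have hlt : t < t + h := by linarith [hh.1]
  have hxy := abs_sub_le_of_lt hu0 hut hshift x y ht hs hlt
  have hyy := abs_sub_le_of_lt hu0 hut hshift y y ht hs hlt
  rw [add_sub_cancel_left] at hxy hyy
  rw [dist_self, Real.zero_rpow hα.ne', abs_sub_comm] at hyy
  calc |u x t - u y t| ≤ |u x t - u y (t + h)| + |u y (t + h) - u y t| := abs_sub_le _ _ _
    _ ≤ _ := add_le_add hxy hyy
    _ = _ := by ring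

theorem abs_sub_le_of_le (hα : 0 < α) (hH0 : 0 ≤ H0) (hM : 0 ≤ M) (hlam : 0 ≤ lam)
    (hc : 0 ≤ c) (x y : X) {t s : ℝ} (ht : t ∈ Ico 0 T) (hs : s ∈ Ico 0 T) (hts : t ≤ s) :
    |u x t - u y s| ≤
      Real.exp (lam * T) * (H0 + M + c) * (dist x y ^ α + |t - s| ^ α) := by
  have hexp : Real.exp (lam * t) ≤ Real.exp (lam * T) :=
    Real.exp_le_exp.2 (mul_le_mul_of_nonneg_left ht.2.le hlam)
  have hd : 0 ≤ dist x y ^ α := by positivity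
  rcases hts.lt_or_eq with hlt | rfl
  · have hh : 0 ≤ (s - t) ^ α := by positivity
    rw [abs_sub_comm t s, abs_of_pos (sub_pos.2 hlt)]
    calc |u x t - u y s|
        ≤ Real.exp (lam * t) * ((H0 + c) * dist x y ^ α + (M + c) * (s - t) ^ α) :=
          abs_sub_le_of_lt hu0 hut hshift x y ht hs.2 hlt
      _ ≤ Real.exp (lam * T) * ((H0 + M + c) * (dist x y ^ α + (s - t) ^ α)) := by
          gcongr
          nlinarith
      _ = _ := by ring
  · rw [sub_self, abs_zero, Real.zero_rpow hα.ne', add_zero]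
    calc |u x t - u y t| ≤ Real.exp (lam * t) * ((H0 + c) * dist x y ^ α) :=
          abs_sub_le_of_eq hu0 hut hshift hα x y ht
      _ ≤ Real.exp (lam * T) * ((H0 + M + c) * dist x y ^ α) := by
          gcongr
          linarith
      _ = _ := by ring

end ShiftEstimate

theorem holder_continuity_on_torus_general (n : ℕ) (α T H0 M lam c : ℝ)
    (hα : α ∈ Set.Ioc (0:ℝ) 1) (hH0 : 0 ≤ H0) (hM : 0 ≤ M)
    (hlam : 0 < lam) (hc : 0 < c) :
    ∃ Hu : ℝ, ∀ u : (Fin n → AddCircle (1:ℝ)) → ℝ → ℝ,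
      (∀ x y : Fin n → AddCircle (1:ℝ), |u x 0 - u y 0| ≤ H0 * dist x y ^ α) →
      (∀ x : Fin n → AddCircle (1:ℝ), ∀ t ∈ Set.Ico (0:ℝ) T,
        |u x t - u x 0| ≤ M * t ^ α) →
      (∀ (e : Fin n → AddCircle (1:ℝ)) (h : ℝ), 0 < h → h < T →
        ∀ A : ℝ, (∀ y, |u y 0 - u (y + e) h| ≤ A) →
        ∀ x : Fin n → AddCircle (1:ℝ), ∀ t ∈ Set.Ico (0:ℝ) T, t + h < T →
          |u x t - u (x + e) (t + h)| ≤
            Real.exp (lam * t) * (A + c * (dist e 0 ^ α + h ^ α))) →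
      ∀ x y : Fin n → AddCircle (1:ℝ), ∀ t ∈ Set.Ico (0:ℝ) T, ∀ s ∈ Set.Ico (0:ℝ) T,
        |u x t - u y s| ≤ Hu * (dist x y ^ α + |t - s| ^ α) := by
  refine ⟨Real.exp (lam * T) * (H0 + M + c), fun u hu0 hut hshift x y t ht s hs => ?_⟩
  simp only [dist_zero_right] at hshift
  rcases le_total t s with hts | hst
  · exact abs_sub_le_of_le hu0 hut hshift hα.1 hH0 hM hlam.le hc.le x y ht hs hts
  · rw [abs_sub_comm, dist_comm, abs_sub_comm t]
    exact abs_sub_le_of_le hu0 hut hshift hα.1 hH0 hM hlam.le hc.le y x hs ht hst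

/-- Lemma 2.14 (Hölder continuity on the torus): if `u(·,0)` is `α`-Hölder with
constant `H₀`, `u` has `α`-growth in time with constant `M`, and `u` satisfies the
continuous-dependence shift estimate, then `u` is `α`-Hölder in space-time, with a
constant depending only on `H₀, M, λ, c, T`. -/
theorem holder_continuity_on_torus (n : ℕ) (α T H0 M lam c : ℝ)
    (hα : α ∈ Set.Ioc (0:ℝ) 1) (hT : 0 < T) (hH0 : 0 ≤ H0) (hM : 0 ≤ M)
    (hlam : 0 < lam) (hc : 0 < c) :
    ∃ Hu : ℝ, ∀ u : (Fin n → AddCircle (1:ℝ)) → ℝ → ℝ,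
      (∀ x y : Fin n → AddCircle (1:ℝ), |u x 0 - u y 0| ≤ H0 * dist x y ^ α) →
      (∀ x : Fin n → AddCircle (1:ℝ), ∀ t ∈ Set.Ico (0:ℝ) T,
        |u x t - u x 0| ≤ M * t ^ α) →
      (∀ (e : Fin n → AddCircle (1:ℝ)) (h : ℝ), 0 < h → h < T →
        ∀ A : ℝ, (∀ y, |u y 0 - u (y + e) h| ≤ A) →
        ∀ x : Fin n → AddCircle (1:ℝ), ∀ t ∈ Set.Ico (0:ℝ) T, t + h < T →
          |u x t - u (x + e) (t + h)| ≤
            Real.exp (lam * t) * (A + c * (dist e 0 ^ α + h ^ α))) →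
      ∀ x y : Fin n → AddCircle (1:ℝ), ∀ t ∈ Set.Ico (0:ℝ) T, ∀ s ∈ Set.Ico (0:ℝ) T,
        |u x t - u y s| ≤ Hu * (dist x y ^ α + |t - s| ^ α) :=
  holder_continuity_on_torus_general n α T H0 M lam c hα hH0 hM hlam hc
end
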